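/- arXiv:2202.10730 — 6 statements merged into one kernel-verified Lean document; each statement's English description precedes it below -/
import Mathlib

section
/- Let X be a Banach space over ℂ, let D be a subspace of X and A : D → X a linear map which is dissipative, i.e., ‖λx − Ax‖ ≥ λ‖x‖ for all λ > 0 and x ∈ D. If the map x ↦ λ₀x − Ax is surjective from D onto X for some λ₀ > 0, then A (as the graph {(x, Ax) : x ∈ D} ⊆ X × X) is a closed operator: whenever x_n ∈ D, x_n → x in X and A x_n → y in X, then x ∈ D and Ax = y. -/
open Filter Topology

/-- A dissipative operator `A : D → X` on a Banach space `X` such that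
`λ₀ − A` is surjective for some `λ₀ > 0` is closed: if `xₙ ∈ D`, `xₙ → x` and
`A xₙ → y`, then `x ∈ D` and `Ax = y`. -/
theorem dissipative_surjective_implies_closed
    {X : Type*} [NormedAddCommGroup X] [NormedSpace ℂ X] [CompleteSpace X]
    (D : Subspace ℂ X) (A : D →ₗ[ℂ] X)
    (hdiss : ∀ lam : ℝ, 0 < lam → ∀ x : D,
      lam * ‖(x : X)‖ ≤ ‖(lam : ℂ) • (x : X) - A x‖)
    (hsurj : ∃ lam₀ : ℝ, 0 < lam₀ ∧
      Function.Surjective (fun x : D => (lam₀ : ℂ) • (x : X) - A x)) :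
    ∀ (u : ℕ → D) (x y : X),
      Tendsto (fun n => (u n : X)) atTop (𝓝 x) →
      Tendsto (fun n => A (u n)) atTop (𝓝 y) →
      ∃ xd : D, (xd : X) = x ∧ A xd = y := by
  obtain ⟨lam, hlam, hs⟩ := hsurj
  intro u x y hx hy
  obtain ⟨w, hw⟩ := hs ((lam : ℂ) • x - y)
  simp only at hw
  -- f n = ‖(lam • u n - A (u n)) - (lam • w - A w)‖ → 0
  have hf : Tendsto (fun n => ‖((lam : ℂ) • (u n : X) - A (u n)) -
      ((lam : ℂ) • (w : X) - A w)‖) atTop (𝓝 0) := by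
    rw [hw]
    have h1 : Tendsto (fun n => ((lam : ℂ) • (u n : X) - A (u n)) -
        ((lam : ℂ) • x - y)) atTop
        (𝓝 (((lam : ℂ) • x - y) - ((lam : ℂ) • x - y))) :=
      ((hx.const_smul _).sub hy).sub tendsto_const_nhds
    rw [sub_self] at h1
    simpa using h1.norm
  -- squeeze: lam * ‖u n - w‖ ≤ f n
  have hle : ∀ n, lam * ‖(u n : X) - (w : X)‖ ≤
      ‖((lam : ℂ) • (u n : X) - A (u n)) - ((lam : ℂ) • (w : X) - A w)‖ := by
    intro n
    have := hdiss lam hlam (u n - w)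
    simpa [smul_sub, map_sub, sub_sub_sub_comm] using this
  have hnorm : Tendsto (fun n => ‖(u n : X) - (w : X)‖) atTop (𝓝 0) := by
    refine squeeze_zero (g := fun n => ‖(lam : ℂ) • (u n : X) - A (u n) -
        ((lam : ℂ) • (w : X) - A w)‖ / lam) (fun n => norm_nonneg _)
      (fun n => (le_div_iff₀' hlam).mpr (hle n)) ?_
    simpa using hf.div_const lam
  have huw : Tendsto (fun n => (u n : X)) atTop (𝓝 (w : X)) :=
    tendsto_iff_norm_sub_tendsto_zero.mpr hnorm
  have hxw : x = (w : X) := tendsto_nhds_unique hx huw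
  refine ⟨w, hxw.symm, ?_⟩
  have : A w = (lam : ℂ) • (w : X) - ((lam : ℂ) • x - y) := by
    rw [← hw]; abel
  rw [this, hxw]; abel
end

section
/- Let X be a Banach space over ℂ, let D be a subspace of X and A : D → X a linear map which is dissipative, i.e., ‖λx − Ax‖ ≥ λ‖x‖ for all λ > 0 and x ∈ D. If the map x ↦ λ₀x − Ax is surjective from D onto X for some λ₀ > 0, then for every λ > 0 the map x ↦ λx − Ax is a bijection from D onto X and its inverse R(λ) satisfies ‖R(λ)y‖ ≤ (1/λ)‖y‖ for all y ∈ X; in particular (0, ∞) is contained in the resolvent set of A. -/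
set_option maxHeartbeats 1000000

/-- A dissipative operator `A : D → X` on a Banach space `X` such that
`λ₀ − A` is surjective for some `λ₀ > 0` satisfies: for every `λ > 0` the map
`λ − A` is a bijection from `D` onto `X` whose inverse `R(λ)` satisfies
`‖R(λ)y‖ ≤ (1/λ)‖y‖`; in particular `(0, ∞) ⊆ ρ(A)`. -/
theorem dissipative_surjective_implies_resolvent_bound
    {X : Type*} [NormedAddCommGroup X] [NormedSpace ℂ X] [CompleteSpace X]
    (D : Subspace ℂ X) (A : D →ₗ[ℂ] X)
    (hdiss : ∀ lam : ℝ, 0 < lam → ∀ x : D,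
      lam * ‖(x : X)‖ ≤ ‖(lam : ℂ) • (x : X) - A x‖)
    (hsurj : ∃ lam₀ : ℝ, 0 < lam₀ ∧
      Function.Surjective (fun x : D => (lam₀ : ℂ) • (x : X) - A x)) :
    ∀ lam : ℝ, 0 < lam →
      Function.Bijective (fun x : D => (lam : ℂ) • (x : X) - A x) ∧
      ∀ (y : X) (x : D), (lam : ℂ) • (x : X) - A x = y →
        ‖(x : X)‖ ≤ (1 / lam) * ‖y‖ := by
  classical
  obtain ⟨l₀, hl₀, hs₀⟩ := hsurj
  set T : ℝ → (D →ₗ[ℂ] X) := fun l => ((l : ℂ) • D.subtype - A) with hTdef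
  have hTapp : ∀ (l : ℝ) (x : D), T l x = (l : ℂ) • (x : X) - A x := by
    intro l x
    simp [hTdef]
  have hfun : ∀ l : ℝ, (fun x : D => (l : ℂ) • (x : X) - A x) = ⇑(T l) := by
    intro l; funext x; rw [hTapp]
  -- injectivity from dissipativity
  have hinj : ∀ l : ℝ, 0 < l → Function.Injective (T l) := by
    intro l hl x y hxy
    have hz : T l (x - y) = 0 := by rw [map_sub, hxy, sub_self]
    rw [hTapp] at hz
    have h := hdiss l hl (x - y)
    rw [hz, norm_zero] at h
    have hn : ‖((x - y : D) : X)‖ = 0 := le_antisymm (by nlinarith) (norm_nonneg _)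
    have : ((x - y : D) : X) = 0 := norm_eq_zero.mp hn
    have : (x - y : D) = 0 := by exact_mod_cast this
    exact sub_eq_zero.mp this
  -- the extension step
  have step : ∀ l : ℝ, 0 < l → Function.Surjective (T l) →
      ∀ m : ℝ, 0 < m → m < 2 * l → Function.Surjective (T m) := by
    intro l hl hs m hm hml
    have hbij : Function.Bijective (T l) := ⟨hinj l hl, hs⟩
    let e := LinearEquiv.ofBijective (T l) hbij
    have hRb : ∀ y : X, ‖(D.subtype.comp e.symm.toLinearMap) y‖ ≤ (1 / l) * ‖y‖ := by
      intro y
      have h := hdiss l hl (e.symm y)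
      have he : T l (e.symm y) = y := e.apply_symm_apply y
      rw [hTapp] at he
      rw [he] at h
      have : ‖((e.symm y : D) : X)‖ ≤ (1 / l) * ‖y‖ := by
        rw [div_mul_eq_mul_div, le_div_iff₀ hl]
        nlinarith
      simpa using this
    let R : X →L[ℂ] X := LinearMap.mkContinuous _ (1 / l) hRb
    have hRapp : ∀ y : X, R y = ((e.symm y : D) : X) := fun y => rfl
    have hRnorm : ‖R‖ ≤ 1 / l := LinearMap.mkContinuous_norm_le _ (by positivity) _
    set t : X →L[ℂ] X := ((m - l : ℝ) : ℂ) • R with htdef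
    have habs : |m - l| < l := abs_lt.mpr ⟨by linarith, by linarith⟩
    have htn : ‖t‖ < 1 := by
      have h1 : ‖t‖ ≤ |m - l| * ‖R‖ := by
        rw [htdef]
        calc ‖((m - l : ℝ) : ℂ) • R‖ ≤ ‖((m - l : ℝ) : ℂ)‖ * ‖R‖ :=
              ContinuousLinearMap.opNorm_smul_le _ _
          _ = |m - l| * ‖R‖ := by rw [Complex.norm_real, Real.norm_eq_abs]
      have h2 : |m - l| * ‖R‖ ≤ |m - l| * (1 / l) :=
        mul_le_mul_of_nonneg_left hRnorm (abs_nonneg _)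
      have h3 : |m - l| * (1 / l) < l * (1 / l) :=
        mul_lt_mul_of_pos_right habs (by positivity)
      have h4 : l * (1 / l) = 1 := by field_simp
      linarith
    have hneg : ‖-t‖ < 1 := by rwa [norm_neg]
    set u : (X →L[ℂ] X)ˣ := Units.oneSub (-t) hneg with hudef
    have huval : (u : X →L[ℂ] X) = 1 + t := by
      rw [hudef]; simp [Units.oneSub]
    intro y
    set z : X := (↑u⁻¹ : X →L[ℂ] X) y with hzdef
    have hz : (1 + t) z = y := by
      rw [← huval, hzdef, ← ContinuousLinearMap.mul_apply, u.mul_inv,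
        ContinuousLinearMap.one_apply]
    refine ⟨e.symm z, ?_⟩
    have h1 : T l (e.symm z) = z := by exact e.apply_symm_apply z
    rw [hTapp] at h1
    have h2 : t z = ((m - l : ℝ) : ℂ) • ((e.symm z : D) : X) := by
      rw [htdef]; simp [hRapp]
    have key : (m : ℂ) • ((e.symm z : D) : X) - A (e.symm z) =
        ((l : ℂ) • ((e.symm z : D) : X) - A (e.symm z)) +
          ((m - l : ℝ) : ℂ) • ((e.symm z : D) : X) := by
      push_cast
      module
    rw [hTapp, key, h1, ← h2]
    rw [ContinuousLinearMap.add_apply, ContinuousLinearMap.one_apply] at hz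
    exact hz
  -- induction to all positive reals
  have hall : ∀ n : ℕ, ∀ m : ℝ, 0 < m → m ≤ (3 / 2 : ℝ) ^ n * l₀ →
      Function.Surjective (T m) := by
    intro n
    induction n with
    | zero =>
      intro m hm hle
      rw [hfun l₀] at hs₀
      exact step l₀ hl₀ hs₀ m hm (by simp at hle; linarith)
    | succ k ih =>
      intro m hm hle
      have hlk : (0 : ℝ) < (3 / 2 : ℝ) ^ k * l₀ := by positivity
      have hsk := ih ((3 / 2 : ℝ) ^ k * l₀) hlk le_rfl
      refine step _ hlk hsk m hm ?_
      have : (3 / 2 : ℝ) ^ (k + 1) * l₀ = (3 / 2) * ((3 / 2 : ℝ) ^ k * l₀) := by ring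
      nlinarith
  have hsurjAll : ∀ l : ℝ, 0 < l → Function.Surjective (T l) := by
    intro l hl
    obtain ⟨n, hn⟩ := pow_unbounded_of_one_lt (l / l₀) (by norm_num : (1 : ℝ) < 3 / 2)
    refine hall n l hl ?_
    rw [div_lt_iff₀ hl₀] at hn
    linarith
  intro lam hlam
  constructor
  · rw [hfun lam]
    exact ⟨hinj lam hlam, hsurjAll lam hlam⟩
  · intro y x hx
    have h := hdiss lam hlam x
    rw [hx] at h
    rw [div_mul_eq_mul_div, le_div_iff₀ hlam]
    nlinarith
end

section
/- Let X be a vector space over ℂ, let p be a seminorm on X, and let x, z ∈ X. Suppose that λ·p(x) ≤ p(λx − z) for every λ > 0. Then there exists a ℂ-linear functional φ : X → ℂ such that Re φ(y) ≤ p(y) for all y ∈ X, φ(x) = p(x), and Re φ(z) ≤ 0. -/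
/-!
Let `q y = inf_{s ≥ 0} p (y - s • z)` be the `p`-distance from `y` to the ray `ℝ≥0 • z`. It is
sublinear, `q ≤ p` and `q z = 0`, while the hypothesis, rescaled, says `t * p x ≤ q (t • x)` for
`t > 0`. Real Hahn–Banach extends `t • x ↦ t * p x` to a real functional `g ≤ q`, which is then
complexified. A complex functional whose real part is below `p` satisfies `‖φ‖ ≤ p` (rotate `y` by
the phase of `φ y`), so `φ x` has real part `p x ≥ ‖φ x‖` and is therefore real.
-/

open NNReal RCLike ComplexConjugate

namespace Seminorm

section Real

variable {X : Type*} [AddCommGroup X] [Module ℝ X] (p : Seminorm ℝ X) (z : X)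

noncomputable def infDistRay (y : X) : ℝ :=
  ⨅ s : ℝ≥0, p (y - (s : ℝ) • z)

variable {p z}

theorem infDistRay_le (y : X) (s : ℝ≥0) : p.infDistRay z y ≤ p (y - (s : ℝ) • z) :=
  ciInf_le ⟨0, by rintro _ ⟨s, rfl⟩; exact apply_nonneg p _⟩ s

theorem infDistRay_nonneg (y : X) : 0 ≤ p.infDistRay z y :=
  Real.iInf_nonneg fun _ => apply_nonneg p _

theorem infDistRay_le_self (y : X) : p.infDistRay z y ≤ p y := by
  simpa using infDistRay_le y 0

theorem infDistRay_self : p.infDistRay z z = 0 :=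
  le_antisymm (by simpa using infDistRay_le (p := p) (z := z) z 1) (infDistRay_nonneg z)

theorem infDistRay_smul {c : ℝ} (hc : 0 < c) (y : X) :
    p.infDistRay z (c • y) = c * p.infDistRay z y := by
  let c' : ℝ≥0 := ⟨c, hc.le⟩
  have hc' : c' ≠ 0 := ne_of_gt hc
  rw [infDistRay, infDistRay, Real.mul_iInf_of_nonneg hc.le,
    ← (Equiv.mulLeft₀ c' hc').iInf_comp]
  congr 1
  ext s
  have hcs : c • y - ((c' * s : ℝ≥0) : ℝ) • z = c • (y - (s : ℝ) • z) := by
    rw [smul_sub, smul_smul]; rfl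
  change p (c • y - ((c' * s : ℝ≥0) : ℝ) • z) = _
  rw [hcs, map_smul_eq_mul, Real.norm_of_nonneg hc.le]

theorem infDistRay_add_le (y₁ y₂ : X) :
    p.infDistRay z (y₁ + y₂) ≤ p.infDistRay z y₁ + p.infDistRay z y₂ :=
  le_ciInf_add_ciInf fun s₁ s₂ => calc
    p.infDistRay z (y₁ + y₂) ≤ p (y₁ + y₂ - ((s₁ + s₂ : ℝ≥0) : ℝ) • z) := infDistRay_le _ _
    _ = p ((y₁ - (s₁ : ℝ) • z) + (y₂ - (s₂ : ℝ) • z)) := by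
      rw [NNReal.coe_add, add_smul]; abel_nf
    _ ≤ _ := map_add_le_add p _ _

theorem smul_le_infDistRay {x : X} (h : ∀ t : ℝ, 0 < t → t * p x ≤ p (t • x - z))
    {t : ℝ} (ht : 0 < t) : t * p x ≤ p.infDistRay z (t • x) := by
  refine le_ciInf fun s => ?_
  rcases eq_or_ne s 0 with rfl | hs
  · simp [map_smul_eq_mul, abs_of_pos ht]
  · have hs : (0 : ℝ) < s := NNReal.coe_pos.2 (pos_iff_ne_zero.2 hs)
    calc t * p x = s * ((t / s) * p x) := by field_simp
      _ ≤ s * p ((t / s) • x - z) := mul_le_mul_of_nonneg_left (h _ (div_pos ht hs)) hs.le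
      _ = p ((s : ℝ) • ((t / s) • x - z)) := by rw [map_smul_eq_mul, Real.norm_of_nonneg hs.le]
      _ = p (t • x - (s : ℝ) • z) := by rw [smul_sub, smul_smul, mul_div_cancel₀ _ hs.ne']

theorem exists_dual_le_of_smul_le_map_smul_sub {x : X}
    (h : ∀ t : ℝ, 0 < t → t * p x ≤ p (t • x - z)) :
    ∃ g : Module.Dual ℝ X, (∀ y, g y ≤ p y) ∧ g x = p x ∧ g z ≤ 0 := by
  have hker : ∀ c : ℝ, c • x = 0 → c • p x = 0 := by
    intro c hc
    rcases smul_eq_zero.1 hc with rfl | rfl <;> simp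
  let f := LinearPMap.mkSpanSingleton' (σ := RingHom.id ℝ) x (p x) hker
  have hf : ∀ w : f.domain, f w ≤ p.infDistRay z w := by
    rintro ⟨_, hw⟩
    obtain ⟨c, rfl⟩ := Submodule.mem_span_singleton.1 hw
    rw [LinearPMap.mkSpanSingleton'_apply, smul_eq_mul]
    rcases le_or_gt c 0 with hc | hc
    · exact (mul_nonpos_of_nonpos_of_nonneg hc (apply_nonneg p x)).trans (infDistRay_nonneg _)
    · exact smul_le_infDistRay h hc
  obtain ⟨g, hgf, hg⟩ :=
    exists_extension_of_le_sublinear f _ (fun _ => infDistRay_smul) infDistRay_add_le hf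
  refine ⟨g, fun y => (hg y).trans (infDistRay_le_self y), ?_, (hg z).trans infDistRay_self.le⟩
  have hx : x ∈ f.domain := Submodule.mem_span_singleton_self x
  rw [hgf ⟨x, hx⟩]
  exact LinearPMap.mkSpanSingleton'_apply_self x (p x) hker hx

end Real

theorem norm_le_of_re_le {𝕜 X : Type*} [RCLike 𝕜] [AddCommGroup X] [Module 𝕜 X]
    (p : Seminorm 𝕜 X) {φ : Module.Dual 𝕜 X} (h : ∀ y, re (φ y) ≤ p y) (y : X) :
    ‖φ y‖ ≤ p y := by
  rcases (norm_nonneg (φ y)).eq_or_lt with h0 | hpos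
  · exact h0 ▸ apply_nonneg p y
  refine le_of_mul_le_mul_left ?_ hpos
  calc ‖φ y‖ * ‖φ y‖ = re (φ (conj (φ y) • y)) := by
        rw [map_smul, smul_eq_mul, RCLike.conj_mul, ← ofReal_pow, ofReal_re, sq]
    _ ≤ p (conj (φ y) • y) := h _
    _ = ‖φ y‖ * p y := by rw [map_smul_eq_mul, RCLike.norm_conj]

end Seminorm

/-- If for a seminorm `p` on a complex vector space `X` and `x, z ∈ X`
one has `λ p(x) ≤ p(λx − z)` for every `λ > 0`, then there exists a linear
functional `φ` with `Re φ(y) ≤ p(y)` for all `y`, `φ(x) = p(x)` and `Re φ(z) ≤ 0`. -/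
theorem dissipative_estimate_implies_subdifferential
    {X : Type*} [AddCommGroup X] [Module ℂ X]
    (p : Seminorm ℂ X) (x z : X)
    (h : ∀ lam : ℝ, 0 < lam → lam * p x ≤ p ((lam : ℂ) • x - z)) :
    ∃ φ : X →ₗ[ℂ] ℂ,
      (∀ y : X, (φ y).re ≤ p y) ∧ φ x = (p x : ℂ) ∧ (φ z).re ≤ 0 := by
  obtain ⟨g, hgp, hgx, hgz⟩ := (p.restrictScalars ℝ).exists_dual_le_of_smul_le_map_smul_sub
    (x := x) (z := z) fun t ht => by simpa [Complex.coe_smul] using h t ht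
  let φ : Module.Dual ℂ X := g.extendRCLike
  have hre : ∀ y, (φ y).re = g y := g.re_extendRCLike_apply (𝕜 := ℂ)
  have hφp : ∀ y, (φ y).re ≤ p y := fun y => (hre y).trans_le (hgp y)
  refine ⟨φ, hφp, ?_, (hre z).trans_le hgz⟩
  have hφx : ‖φ x‖ ≤ (φ x).re := (p.norm_le_of_re_le hφp x).trans_eq (by rw [hre, hgx]; rfl)
  rw [← RCLike.re_eq_self_of_le hφx]
  exact congrArg _ ((hre x).trans hgx)
end

section
/- Let f : ℝ → ℝ be twice continuously differentiable with f(x) = x² for all x ∈ [−2, 2]. Then sup_{x∈[−2,2]} |f(x) − f''(x)| = 2 while sup_{x∈[−2,2]} |f(x)| = 4. In particular, the inequality sup_{x∈[−2,2]} |λ·f(x) − f''(x)| ≥ λ·sup_{x∈[−2,2]} |f(x)| fails for λ = 1, so the one-dimensional Laplacian Af = f'' on C²_b(ℝ) is not bi-dissipative with respect to the seminorms p_n(f) = sup_{x∈[−n,n]} |f(x)|. -/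
/-- For any twice continuously differentiable `f : ℝ → ℝ` with
`f(x) = x²` on `[−2,2]` one has `sup_{x∈[−2,2]} |f(x) − f''(x)| = 2` and
`sup_{x∈[−2,2]} |f(x)| = 4`; in particular the bi-dissipativity inequality
`sup_{x∈[−2,2]} |λ f(x) − f''(x)| ≥ λ sup_{x∈[−2,2]} |f(x)|` fails for `λ = 1`,
so the one-dimensional Laplacian is not bi-dissipative for these seminorms. -/
theorem laplacian_not_bi_dissipative
    (f : ℝ → ℝ) (hf : ContDiff ℝ 2 f)
    (hf2 : ∀ x ∈ Set.Icc (-2 : ℝ) 2, f x = x ^ 2) :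
    (⨆ x : Set.Icc (-2 : ℝ) 2, |f x - deriv (deriv f) x|) = 2 ∧
    (⨆ x : Set.Icc (-2 : ℝ) 2, |f x|) = 4 ∧
    ¬ ((1 : ℝ) * (⨆ x : Set.Icc (-2 : ℝ) 2, |f x|) ≤
        ⨆ x : Set.Icc (-2 : ℝ) 2, |(1 : ℝ) * f x - deriv (deriv f) x|) := by
  have hf' : ContDiff ℝ 1 (deriv f) := by
    exact (contDiff_succ_iff_deriv.mp (by exact_mod_cast hf : ContDiff ℝ (1 + 1) f)).2.2
  have hcont1 : Continuous (deriv f) := hf'.continuous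
  have hcont2 : Continuous (deriv (deriv f)) := hf'.continuous_deriv le_rfl
  -- deriv f = 2x on the open interval
  have h1 : Set.EqOn (deriv f) (fun x => 2 * x) (Set.Ioo (-2 : ℝ) 2) := by
    intro x hx
    have hev : f =ᶠ[nhds x] fun y => y ^ 2 := by
      filter_upwards [Ioo_mem_nhds hx.1 hx.2] with y hy
      exact hf2 y (Set.Ioo_subset_Icc_self hy)
    rw [hev.deriv_eq]
    simp [deriv_pow, mul_comm]
  -- extend to closed interval by continuity
  have h1c : Set.EqOn (deriv f) (fun x => 2 * x) (Set.Icc (-2 : ℝ) 2) := by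
    have := h1.closure hcont1 (by continuity)
    rwa [closure_Ioo (by norm_num : (-2 : ℝ) ≠ 2)] at this
  -- deriv (deriv f) = 2 on the open interval
  have h2 : Set.EqOn (deriv (deriv f)) (fun _ => 2) (Set.Ioo (-2 : ℝ) 2) := by
    intro x hx
    have hev : deriv f =ᶠ[nhds x] fun y => 2 * y := by
      filter_upwards [Ioo_mem_nhds hx.1 hx.2] with y hy
      exact h1 hy
    rw [hev.deriv_eq]
    rw [deriv_const_mul _ differentiable_id.differentiableAt]
    simp
  have h2c : Set.EqOn (deriv (deriv f)) (fun _ => 2) (Set.Icc (-2 : ℝ) 2) := by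
    have := h2.closure hcont2 continuous_const
    rwa [closure_Ioo (by norm_num : (-2 : ℝ) ≠ 2)] at this
  -- compute the suprema
  haveI : Nonempty (Set.Icc (-2 : ℝ) 2) := ⟨⟨0, by norm_num⟩⟩
  have hmem2 : (2 : ℝ) ∈ Set.Icc (-2 : ℝ) 2 := by norm_num
  have hsup1 : (⨆ x : Set.Icc (-2 : ℝ) 2, |f x - deriv (deriv f) x|) = 2 := by
    apply le_antisymm
    · apply ciSup_le
      rintro ⟨x, hx⟩
      rw [hf2 x hx, h2c hx]
      show |x ^ 2 - 2| ≤ 2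
      rw [abs_le]
      constructor <;> nlinarith [hx.1, hx.2]
    · have hb : BddAbove (Set.range fun x : Set.Icc (-2 : ℝ) 2 =>
          |f x - deriv (deriv f) x|) := by
        apply bddAbove_iff_exists_ge (2 : ℝ) |>.mpr
        refine ⟨2, le_rfl, ?_⟩
        rintro y ⟨⟨x, hx⟩, rfl⟩
        simp only
        rw [hf2 x hx, h2c hx]
        show |x ^ 2 - 2| ≤ 2
        rw [abs_le]
        constructor <;> nlinarith [hx.1, hx.2]
      refine le_ciSup_of_le hb ⟨2, hmem2⟩ ?_
      rw [hf2 2 hmem2, h2c hmem2]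
      norm_num
  have hsup2 : (⨆ x : Set.Icc (-2 : ℝ) 2, |f x|) = 4 := by
    apply le_antisymm
    · apply ciSup_le
      rintro ⟨x, hx⟩
      rw [hf2 x hx, abs_le]
      constructor <;> nlinarith [hx.1, hx.2]
    · have hb : BddAbove (Set.range fun x : Set.Icc (-2 : ℝ) 2 => |f x|) := by
        apply bddAbove_iff_exists_ge (4 : ℝ) |>.mpr
        refine ⟨4, le_rfl, ?_⟩
        rintro y ⟨⟨x, hx⟩, rfl⟩
        simp only
        rw [hf2 x hx, abs_le]
        constructor <;> nlinarith [hx.1, hx.2]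
      refine le_ciSup_of_le hb ⟨2, hmem2⟩ ?_
      rw [hf2 2 hmem2]
      norm_num
  refine ⟨hsup1, hsup2, ?_⟩
  simp only [one_mul]
  rw [hsup1, hsup2]
  norm_num
end

section
/- Let λ > 0 and n ∈ ℕ. For every x ∈ [−1, 0], the function s ↦ e^{−λ(x−s)} is integrable on (−∞, x−n−1] and ∫_{−∞}^{x−n−1} e^{−λ(x−s)} ds = (1/λ)·e^{−λ(n+1)}. Consequently, if f : ℝ → [0,1] is measurable with f(s) = 1 for all s ≤ −n−1 and f(s) = 0 for all s ∈ [−n, 0], then for every x ∈ [−1, 0] one has ∫₀^∞ e^{−λt} f(x−t) dt ≥ (1/λ)·e^{−λ(n+1)} > 0, while sup_{s∈[−n,0]} |f(s)| = 0. -/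
/-!
Writing `e^{-λ(x-s)} = e^{-λx} e^{λs}` reduces the first part to `∫_{-∞}^c e^{λs} ds = e^{λc}/λ`.
For the lower bound, the integrand `e^{-λt} f(x-t)` is nonnegative and equals `e^{-λt}` for
`t > x+n+1 ≥ 0`, because there `x - t ≤ -n-1`; the tail integral `e^{-λ(x+n+1)}/λ` is at least
`e^{-λ(n+1)}/λ` since `x ≤ 0`.
-/

open MeasureTheory Real Set

lemma exp_neg_mul_sub_eq (lam x : ℝ) :
    (fun s => exp (-(lam * (x - s)))) = fun s => exp (-(lam * x)) * exp (lam * s) := by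
  ext s
  rw [← exp_add]
  ring_nf

lemma integrableOn_exp_neg_mul_sub_Iic {lam : ℝ} (hlam : 0 < lam) (x c : ℝ) :
    IntegrableOn (fun s => exp (-(lam * (x - s)))) (Iic c) := by
  rw [exp_neg_mul_sub_eq]
  exact (integrableOn_exp_mul_Iic hlam c).const_mul _

lemma integral_exp_neg_mul_sub_Iic {lam : ℝ} (hlam : 0 < lam) (x c : ℝ) :
    ∫ s in Iic c, exp (-(lam * (x - s))) = exp (-(lam * (x - c))) / lam := by
  rw [exp_neg_mul_sub_eq, integral_const_mul, integral_exp_mul_Iic hlam, mul_div_assoc', ← exp_add]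
  ring_nf

lemma integral_exp_neg_mul_Ioi {lam : ℝ} (hlam : 0 < lam) (a : ℝ) :
    ∫ t in Ioi a, exp (-(lam * t)) = exp (-(lam * a)) / lam := by
  simpa [neg_mul, div_neg, neg_div] using integral_exp_mul_Ioi (neg_neg_of_pos hlam) a

lemma integrableOn_exp_neg_mul_mul_Ioi {lam : ℝ} (hlam : 0 < lam) (a : ℝ) {g : ℝ → ℝ}
    (hg : AEStronglyMeasurable g (volume.restrict (Ioi a))) (hg_bdd : ∀ t, |g t| ≤ 1) :
    IntegrableOn (fun t => exp (-(lam * t)) * g t) (Ioi a) := by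
  have h := integrableOn_exp_mul_Ioi (neg_neg_of_pos hlam) a
  simp only [neg_mul] at h
  exact h.mul_bdd hg (.of_forall hg_bdd)

lemma exp_neg_mul_div_le_integral_mul {lam a : ℝ} (hlam : 0 < lam) (ha : 0 ≤ a) {g : ℝ → ℝ}
    (hg : Measurable g) (hg01 : ∀ t, g t ∈ Icc (0 : ℝ) 1) (hg1 : ∀ t, a < t → g t = 1) :
    exp (-(lam * a)) / lam ≤ ∫ t in Ioi 0, exp (-(lam * t)) * g t := by
  have hint : IntegrableOn (fun t => exp (-(lam * t)) * g t) (Ioi 0) :=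
    integrableOn_exp_neg_mul_mul_Ioi hlam 0 hg.aestronglyMeasurable
      fun t => abs_le.2 ⟨by linarith [(hg01 t).1], (hg01 t).2⟩
  calc exp (-(lam * a)) / lam = ∫ t in Ioi a, exp (-(lam * t)) * g t := by
        rw [← integral_exp_neg_mul_Ioi hlam a]
        refine setIntegral_congr_fun measurableSet_Ioi fun t ht => ?_
        simp [hg1 t ht]
    _ ≤ ∫ t in Ioi 0, exp (-(lam * t)) * g t :=
        setIntegral_mono_set hint (.of_forall fun t => mul_nonneg (exp_pos _).le (hg01 t).1)
          (.of_forall (Ioi_subset_Ioi ha))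

/-- For `λ > 0`, `n ∈ ℕ` and `x ∈ [−1,0]`, the function
`s ↦ e^{−λ(x−s)}` is integrable on `(−∞, x−n−1]` with integral `(1/λ)e^{−λ(n+1)}`.
Hence for any measurable `f : ℝ → [0,1]` with `f ≡ 1` on `(−∞, −n−1]` and `f ≡ 0`
on `[−n, 0]` one has `∫₀^∞ e^{−λt} f(x−t) dt ≥ (1/λ)e^{−λ(n+1)} > 0` for all
`x ∈ [−1,0]`, while `sup_{s∈[−n,0]} |f(s)| = 0`. -/
theorem right_translation_generator_not_bi_dissipative_computation
    (lam : ℝ) (hlam : 0 < lam) (n : ℕ) :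
    (∀ x ∈ Set.Icc (-1 : ℝ) 0,
      IntegrableOn (fun s : ℝ => Real.exp (-(lam * (x - s)))) (Set.Iic (x - n - 1)) ∧
      (∫ s in Set.Iic (x - (n : ℝ) - 1), Real.exp (-(lam * (x - s)))) =
        (1 / lam) * Real.exp (-(lam * (n + 1)))) ∧
    ∀ f : ℝ → ℝ, Measurable f → (∀ s, f s ∈ Set.Icc (0 : ℝ) 1) →
      (∀ s : ℝ, s ≤ -(n : ℝ) - 1 → f s = 1) →
      (∀ s ∈ Set.Icc (-(n : ℝ)) 0, f s = 0) →
      (∀ x ∈ Set.Icc (-1 : ℝ) 0,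
        (1 / lam) * Real.exp (-(lam * (n + 1))) ≤
          ∫ t in Set.Ioi (0 : ℝ), Real.exp (-(lam * t)) * f (x - t)) ∧
      0 < (1 / lam) * Real.exp (-(lam * (n + 1))) ∧
      (⨆ s : Set.Icc (-(n : ℝ)) 0, |f s|) = 0 := by
  refine ⟨fun x _ => ⟨integrableOn_exp_neg_mul_sub_Iic hlam x _, ?_⟩,
    fun f hf hf01 hf1 hf0 => ⟨fun x hx => ?_, by positivity, ?_⟩⟩
  · rw [integral_exp_neg_mul_sub_Iic hlam, one_div_mul_eq_div]
    ring_nf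
  · have hn : (0 : ℝ) ≤ n := n.cast_nonneg
    calc 1 / lam * exp (-(lam * (n + 1))) ≤ exp (-(lam * (x + n + 1))) / lam := by
          rw [one_div_mul_eq_div]
          gcongr
          linarith [hx.2]
      _ ≤ ∫ t in Ioi 0, exp (-(lam * t)) * f (x - t) :=
          exp_neg_mul_div_le_integral_mul hlam (by linarith [hx.1])
            (hf.comp (measurable_const.sub measurable_id)) (fun t => hf01 _)
            fun t ht => hf1 _ (by linarith)
  · simp_rw [fun s : Icc (-(n : ℝ)) 0 => hf0 s s.2, abs_zero]
    exact iSup_const_zero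
end

section
/- Let X be a normed vector space over ℂ, let D be a subspace of X and A : D → X a linear map. Let Γ be a family of seminorms on X such that p(λx − Ax) ≥ λ·p(x) for every λ > 0, every p ∈ Γ and every x ∈ D, and suppose that for some λ > 0 the map x ↦ λx − Ax is injective with inverse R(λ) defined on its range. Then for every p ∈ Γ, every n ∈ ℕ and every y in the domain of R(λ)ⁿ, p(λⁿ·R(λ)ⁿ y) ≤ p(y); in particular, if λ − A is bijective onto X then the family {λⁿ R(λ,A)ⁿ : n ∈ ℕ, λ > 0} satisfies the uniform seminorm bound p(λⁿ R(λ,A)ⁿ y) ≤ p(y) for all y ∈ X. -/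
/-!
By dissipativity, `λ − A` multiplies every `p ∈ Γ` by at least `λ`. So along a chain
`w (i+1) = (λ − A)(w i)` the values `p (w i)` grow at least geometrically with ratio `λ`,
and every application of a right inverse `R(λ)` of `λ − A` divides `p` by at least `λ`.
-/

namespace Seminorm

variable {𝕜 X : Type*} [AddCommGroup X]

theorem map_ofReal_pow_smul [Module ℂ X] (p : Seminorm ℂ X) {r : ℝ} (hr : 0 ≤ r) (n : ℕ)
    (x : X) : p ((r : ℂ) ^ n • x) = r ^ n * p x := by
  rw [map_smul_eq_mul, norm_pow, Complex.norm_of_nonneg hr]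

theorem pow_mul_map_iterate_le [SeminormedRing 𝕜] [SMul 𝕜 X] (p : Seminorm 𝕜 X) {g : X → X}
    {c : ℝ} (hc : 0 ≤ c) (hg : ∀ z, c * p (g z) ≤ p z) (n : ℕ) (y : X) :
    c ^ n * p (g^[n] y) ≤ p y := by
  induction n with
  | zero => simp
  | succ n ih =>
    calc c ^ (n + 1) * p (g^[n + 1] y) = c ^ n * (c * p (g (g^[n] y))) := by
          rw [Function.iterate_succ_apply', pow_succ, mul_assoc]
      _ ≤ c ^ n * p (g^[n] y) := mul_le_mul_of_nonneg_left (hg _) (pow_nonneg hc n)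
      _ ≤ p y := ih

end Seminorm

/-- If `A : D → X` is bi-dissipative with respect to a family `Γ` of
seminorms, then the powers of the resolvent satisfy `p(λⁿ R(λ)ⁿ y) ≤ p(y)` on the
domain of `R(λ)ⁿ` (expressed via a chain `w 0, …, w n` with
`w (i+1) = (λ − A)(w i)`, so that `w 0 = R(λ)ⁿ (w n)`); in particular, if
`λ − A` is bijective onto `X` for every `λ > 0`, then the family
`{λⁿ R(λ,A)ⁿ : n ∈ ℕ, λ > 0}` satisfies the uniform seminorm bound
`p(λⁿ R(λ,A)ⁿ y) ≤ p(y)` for all `y ∈ X`. -/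
theorem bi_dissipative_resolvent_powers_seminorm_bound
    {X : Type*} [NormedAddCommGroup X] [NormedSpace ℂ X]
    (D : Subspace ℂ X) (A : D →ₗ[ℂ] X)
    (Γ : Set (Seminorm ℂ X))
    (hdiss : ∀ lam : ℝ, 0 < lam → ∀ p ∈ Γ, ∀ x : D,
      lam * p (x : X) ≤ p ((lam : ℂ) • (x : X) - A x)) :
    (∀ lam : ℝ, 0 < lam → ∀ p ∈ Γ, ∀ (n : ℕ) (w : ℕ → X),
      (∀ i < n, ∃ d : D, (d : X) = w i ∧ (lam : ℂ) • (d : X) - A d = w (i + 1)) →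
      p ((lam : ℂ) ^ n • w 0) ≤ p (w n)) ∧
    ((∀ lam : ℝ, 0 < lam →
        Function.Bijective (fun x : D => (lam : ℂ) • (x : X) - A x)) →
      ∀ lam : ℝ, 0 < lam → ∀ p ∈ Γ, ∀ (n : ℕ) (y : X),
        p ((lam : ℂ) ^ n •
            (fun z : X =>
              ((Function.invFun (fun x : D => (lam : ℂ) • (x : X) - A x) z : D) : X))^[n]
              y) ≤ p y) := by
  refine ⟨fun lam hlam p hp n w hw => ?_, fun hbij lam hlam p hp n y => ?_⟩
  · rw [p.map_ofReal_pow_smul hlam.le]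
    refine geom_le (u := fun i => p (w i)) hlam.le n fun i hi => ?_
    obtain ⟨d, hdw, hdA⟩ := hw i hi
    simpa only [← hdw, ← hdA] using hdiss lam hlam p hp d
  · rw [p.map_ofReal_pow_smul hlam.le]
    refine p.pow_mul_map_iterate_le hlam.le (fun z => ?_) n y
    have hsection := Function.rightInverse_invFun (hbij lam hlam).2 z
    exact (hdiss lam hlam p hp _).trans_eq (congrArg p hsection)
end
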